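/- arXiv:1602.08585 — 2 statements merged into one kernel-verified Lean document; each statement's English description precedes it below -/
import Mathlib

section
/- Let d ≥ 2. Then x_1² ∉ J, and for every homogeneous polynomial p ∈ F_2[x_1,…,x_d] of degree 2, either p ∈ J or p − x_1² ∈ J. (Hence the degree-2 graded piece of F_2[x_1,…,x_d]/J is one-dimensional, spanned by the class of x_1².) -/
open MvPolynomial

abbrev S4 : Type := ZMod 2 × ZMod 2

def Sα (s : S4) : ZMod 2 := s.1
def Sβ (s : S4) : ZMod 2 := s.2

def s0 : S4 := (0, 0)
def s1 : S4 := (1, 1)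
def s2 : S4 := (1, 0)
def s3 : S4 := (0, 1)

/-- The linear form `α_j^A = Σ_i α(A_{ij}) x_i`. -/
noncomputable def alphaP {d : ℕ} {ι : Type*} (A : Matrix (Fin d) ι S4) (j : ι) :
    MvPolynomial (Fin d) (ZMod 2) := ∑ i, C (Sα (A i j)) * X i

/-- The linear form `β_j^A = Σ_i β(A_{ij}) x_i`. -/
noncomputable def betaP {d : ℕ} {ι : Type*} (A : Matrix (Fin d) ι S4) (j : ι) :
    MvPolynomial (Fin d) (ZMod 2) := ∑ i, C (Sβ (A i j)) * X i

/-- `θ_j^A = α_j^A · β_j^A`. -/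
noncomputable def thetaP {d : ℕ} {ι : Type*} (A : Matrix (Fin d) ι S4) (j : ι) :
    MvPolynomial (Fin d) (ZMod 2) := alphaP A j * betaP A j

/-- The characteristic ideal `I_A = ⟨θ_1^A, …, θ_n^A⟩`. -/
noncomputable def charIdeal {d : ℕ} {ι : Type*} (A : Matrix (Fin d) ι S4) :
    Ideal (MvPolynomial (Fin d) (ZMod 2)) := Ideal.span (Set.range (thetaP A))

/-- The Stiefel–Whitney polynomial `w(A) = Π_j (1 + α_j^A + β_j^A)`. -/
noncomputable def swPoly {d : ℕ} {ι : Type*} [Fintype ι] (A : Matrix (Fin d) ι S4) :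
    MvPolynomial (Fin d) (ZMod 2) := ∏ j, (1 + alphaP A j + betaP A j)

/-- The ideal `J = ⟨{x_i² + x_j² : i ≠ j} ∪ {x_i x_j : i ≠ j}⟩`. -/
noncomputable def Jideal (d : ℕ) : Ideal (MvPolynomial (Fin d) (ZMod 2)) :=
  Ideal.span ({q | ∃ i j : Fin d, i ≠ j ∧ q = X i ^ 2 + X j ^ 2} ∪
              {q | ∃ i j : Fin d, i ≠ j ∧ q = X i * X j})

/-- `A₀ ∈ S^{d×(d-1)}`: the `l`-th column has entry `1` in rows `l` and `d`, `0` elsewhere. -/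
def matA0 (d : ℕ) : Matrix (Fin d) (Fin (d - 1)) S4 :=
  fun i l => if i.val = l.val ∨ i.val = d - 1 then s1 else s0

/-- Index set for the columns of `A₁`: pairs `1 ≤ i < j ≤ d`. -/
abbrev PairIdx (d : ℕ) : Type := {p : Fin d × Fin d // p.1 < p.2}

/-- `A₁ ∈ S^{d×(d(d-1)/2)}`: the column indexed by `i < j` has entry `2` in row `i`,
entry `3` in row `j` and `0` elsewhere. -/
def matA1 (d : ℕ) : Matrix (Fin d) (PairIdx d) S4 :=
  fun i p => if i = p.1.1 then s2 else if i = p.1.2 then s3 else s0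

/-- `A = [A₀, A₁]`. -/
def matA (d : ℕ) : Matrix (Fin d) (Fin (d - 1) ⊕ PairIdx d) S4 :=
  Matrix.fromCols (matA0 d) (matA1 d)

/-- `B ∈ S^{d×1}`: all entries `2`. -/
def matB (d : ℕ) : Matrix (Fin d) (Fin 1) S4 := fun _ _ => s2

/-- `C ∈ S^{d×1}`: entry `2` in row `1`, `0` elsewhere. -/
def matC (d : ℕ) : Matrix (Fin d) (Fin 1) S4 := fun i _ => if i.val = 0 then s2 else s0

/-- `E = [A,B,C,C]` (the case `d ≡ 0 mod 2`). -/
def matE0 (d : ℕ) := Matrix.fromCols (matA d)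
  (Matrix.fromCols (matB d) (Matrix.fromCols (matC d) (matC d)))

/-- `E = [A,B,B]` (the case `d ≡ 1 mod 4`). -/
def matE1 (d : ℕ) := Matrix.fromCols (matA d) (Matrix.fromCols (matB d) (matB d))

/-- `F = [E,C,C,C,C] = [A,C,C,C,C]` (the case `d ≡ 3 mod 4`; there `E = A`). -/
def matF3 (d : ℕ) := Matrix.fromCols (matA d)
  (Matrix.fromCols (matC d)
    (Matrix.fromCols (matC d) (Matrix.fromCols (matC d) (matC d))))

/-! The linear form `sqCoeffSum`, summing the coefficients of `x_1², …, x_d²`, vanishes on `J`: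
a multiple of `x_i x_j` (`i ≠ j`) contains no pure square, and the square coefficients of
`q (x_i² + x_j²)` add up to `2 q(0) = 0`. As it takes the value `1` on `x_1²`, `x_1² ∉ J`.
Modulo `J` a quadratic monomial `x_a x_b` is `0` if `a ≠ b` and `x_1²` if `a = b`, so every
quadratic form `p` is congruent to `sqCoeffSum p • x_1²`. -/

namespace Finsupp

lemma exists_eq_single_add_single_of_degree_eq_two {α : Type*} {m : α →₀ ℕ}
    (hm : m.degree = 2) : ∃ a b, m = single a 1 + single b 1 := by
  classical
  have hcard : Multiset.card (toMultiset m) = 2 := by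
    rw [card_toMultiset, ← hm, degree_apply, Finsupp.sum]
    rfl
  obtain ⟨a, b, hab⟩ := Multiset.card_eq_two.mp hcard
  refine ⟨a, b, ?_⟩
  rw [toMultiset_eq_iff.mp hab, Multiset.insert_eq_cons, ← Multiset.singleton_add,
    Multiset.toFinsupp_add, Multiset.toFinsupp_singleton, Multiset.toFinsupp_singleton]

end Finsupp

namespace MvPolynomial

section SquareCoefficients

variable {σ R : Type*} [CommSemiring R]

lemma coeff_single_two_mul_X_sq_self (q : MvPolynomial σ R) (i : σ) :
    coeff (Finsupp.single i 2) (q * X i ^ 2) = constantCoeff q := by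
  simp [X_pow_eq_monomial, coeff_mul_monomial', constantCoeff]

lemma coeff_single_two_mul_X_sq_of_ne (q : MvPolynomial σ R) {i k : σ} (hik : i ≠ k) :
    coeff (Finsupp.single k 2) (q * X i ^ 2) = 0 := by
  rw [X_pow_eq_monomial, coeff_mul_monomial', if_neg]
  intro hle
  simpa [Finsupp.single_eq_of_ne hik] using Finsupp.le_def.1 hle i

lemma coeff_single_two_mul_X_mul_X (q : MvPolynomial σ R) {i j : σ} (hij : i ≠ j) (k : σ) :
    coeff (Finsupp.single k 2) (q * (X i * X j)) = 0 := by
  rw [X, X, monomial_mul, mul_one, coeff_mul_monomial', if_neg]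
  intro hle
  obtain ⟨l, hl, hlk⟩ : ∃ l, (l = i ∨ l = j) ∧ l ≠ k := by
    by_cases hik : i = k
    · exact ⟨j, Or.inr rfl, hik ▸ hij.symm⟩
    · exact ⟨i, Or.inl rfl, hik⟩
  have := Finsupp.le_def.1 hle l
  rcases hl with rfl | rfl <;> simp [Finsupp.single_eq_of_ne hlk, hij, hij.symm] at this

variable [Fintype σ]

noncomputable def sqCoeffSum : MvPolynomial σ R →ₗ[R] R :=
  ∑ i, lcoeff R (Finsupp.single i 2)

lemma sqCoeffSum_apply (p : MvPolynomial σ R) :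
    sqCoeffSum p = ∑ i, coeff (Finsupp.single i 2) p := by
  simp [sqCoeffSum]

lemma sqCoeffSum_mul_X_sq (q : MvPolynomial σ R) (i : σ) :
    sqCoeffSum (q * X i ^ 2) = constantCoeff q := by
  rw [sqCoeffSum_apply, Finset.sum_eq_single i
    (fun k _ hki => coeff_single_two_mul_X_sq_of_ne q hki.symm) (by simp),
    coeff_single_two_mul_X_sq_self]

lemma sqCoeffSum_mul_X_mul_X (q : MvPolynomial σ R) {i j : σ} (hij : i ≠ j) :
    sqCoeffSum (q * (X i * X j)) = 0 := by
  simp [sqCoeffSum_apply, coeff_single_two_mul_X_mul_X q hij]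

lemma sqCoeffSum_X_sq (i : σ) : sqCoeffSum (X i ^ 2 : MvPolynomial σ R) = 1 := by
  simpa using sqCoeffSum_mul_X_sq (1 : MvPolynomial σ R) i

lemma sqCoeffSum_X_mul_X {i j : σ} (hij : i ≠ j) :
    sqCoeffSum (X i * X j : MvPolynomial σ R) = 0 := by
  simpa using sqCoeffSum_mul_X_mul_X (1 : MvPolynomial σ R) hij

end SquareCoefficients

end MvPolynomial

section Jideal

variable {d : ℕ}

lemma X_sq_add_X_sq_mem_Jideal {i j : Fin d} (hij : i ≠ j) : X i ^ 2 + X j ^ 2 ∈ Jideal d :=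
  Ideal.subset_span (Or.inl ⟨i, j, hij, rfl⟩)

lemma X_mul_X_mem_Jideal {i j : Fin d} (hij : i ≠ j) : X i * X j ∈ Jideal d :=
  Ideal.subset_span (Or.inr ⟨i, j, hij, rfl⟩)

lemma sqCoeffSum_eq_zero_of_mem_Jideal {p : MvPolynomial (Fin d) (ZMod 2)}
    (hp : p ∈ Jideal d) : sqCoeffSum p = 0 := by
  obtain ⟨n, c, g, rfl⟩ := Submodule.mem_span_set'.mp hp
  refine (map_sum _ _ _).trans (Finset.sum_eq_zero fun k _ => ?_)
  obtain ⟨i, j, hij, hg⟩ | ⟨i, j, hij, hg⟩ := (g k).2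
  · rw [smul_eq_mul, hg, mul_add, map_add, sqCoeffSum_mul_X_sq, sqCoeffSum_mul_X_sq]
    exact CharTwo.add_self_eq_zero _
  · rw [smul_eq_mul, hg, sqCoeffSum_mul_X_mul_X _ hij]

lemma X_mul_X_sub_sqCoeffSum_smul_mem_Jideal (i₀ a b : Fin d) :
    X a * X b - sqCoeffSum (X a * X b : MvPolynomial (Fin d) (ZMod 2)) • X i₀ ^ 2 ∈
      Jideal d := by
  rcases eq_or_ne a b with rfl | hab
  · rw [← sq, sqCoeffSum_X_sq, one_smul]
    rcases eq_or_ne a i₀ with rfl | ha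
    · rw [sub_self]
      exact zero_mem _
    · rw [CharTwo.sub_eq_add]
      exact X_sq_add_X_sq_mem_Jideal ha
  · rw [sqCoeffSum_X_mul_X hab, zero_smul, sub_zero]
    exact X_mul_X_mem_Jideal hab

lemma sub_sqCoeffSum_smul_X_sq_mem_Jideal (i₀ : Fin d) {p : MvPolynomial (Fin d) (ZMod 2)}
    (hp : p.IsHomogeneous 2) : p - sqCoeffSum p • X i₀ ^ 2 ∈ Jideal d := by
  let K := ((Jideal d).restrictScalars (ZMod 2)).comap
    (LinearMap.id - (sqCoeffSum (σ := Fin d) (R := ZMod 2)).smulRight (X i₀ ^ 2))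
  change p ∈ K
  rw [p.as_sum]
  refine Submodule.sum_mem _ fun m hm => ?_
  have hm2 : m.degree = 2 := by
    rw [Finsupp.degree_eq_weight_one]
    exact hp (mem_support_iff.mp hm)
  obtain ⟨a, b, rfl⟩ := Finsupp.exists_eq_single_add_single_of_degree_eq_two hm2
  rw [← mul_one (coeff _ p), ← smul_eq_mul, ← smul_monomial]
  refine K.smul_mem _ ?_
  rw [← one_mul (1 : ZMod 2), ← monomial_mul, ← X, ← X]
  exact X_mul_X_sub_sqCoeffSum_smul_mem_Jideal i₀ a b

end Jideal

/-- `x₁² ∉ J`, and every homogeneous quadratic is congruent mod `J`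
to `0` or to `x₁²`. -/
theorem degree_two_piece (d : ℕ) (hd : 2 ≤ d) :
    X (⟨0, by omega⟩ : Fin d) ^ 2 ∉ Jideal d ∧
    ∀ p : MvPolynomial (Fin d) (ZMod 2), p.IsHomogeneous 2 →
      p ∈ Jideal d ∨ p - X (⟨0, by omega⟩ : Fin d) ^ 2 ∈ Jideal d := by
  refine ⟨fun h => ?_, fun p hp => ?_⟩
  · simpa [sqCoeffSum_X_sq] using sqCoeffSum_eq_zero_of_mem_Jideal h
  · have hmem := sub_sqCoeffSum_smul_X_sq_mem_Jideal ⟨0, by omega⟩ hp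
    rcases (by decide : ∀ c : ZMod 2, c = 0 ∨ c = 1) (sqCoeffSum p) with h | h
    · left
      simpa [h] using hmem
    · right
      simpa [h] using hmem
end

section
/- Let d ≥ 2 and let F ∈ S^{d×n(d)} be the matrix defined below, where n(d) = d(d+1)/2 + 2 if d ≡ 0 mod 2, n(d) = d(d+1)/2 + 1 if d ≡ 1 mod 4, and n(d) = d(d+1)/2 + 3 if d ≡ 3 mod 4. Then F is free and effective: for every nonzero x ∈ F_2^d there exists a column index j with s_j(x) = 1, and there exists a column index j' with s_{j'}(x) ∈ {2,3}, where s_j(x) denotes the sum in the group S of the entries F_{ij} over all rows i with x_i = 1. -/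
/-! Both coordinates of a column sum are `F₂`-linear in `x`. A nonzero `x` is either the
all-ones vector or differs in two rows. In the second case some row `i < d` has `x_i ≠ x_d`,
so the `i`-th column of `A₀` sums to `1`, and the `A₁`-column of two rows where `x` differs
sums to `(x_a, x_b) ∈ {2, 3}`. For `x = 1` the `A₁`-column of rows `1, 2` sums to `1`, and
a column of `C` (or of `B`, when `d` is odd) sums to `2`. -/

open MvPolynomial

/-- `s_j(x)`: the sum in the group `S` of the entries `A i j` over all rows `i` with `x i = 1`. -/
def colSum {d : ℕ} {ι : Type*} (A : Matrix (Fin d) ι S4) (x : Fin d → ZMod 2) (j : ι) : S4 :=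
  ∑ i, (x i).val • A i j

section

variable {d : ℕ} {ι κ : Type*}

lemma colSum_eq_sum_smul (A : Matrix (Fin d) ι S4) (x : Fin d → ZMod 2)
    (j : ι) : colSum A x j = ∑ i, x i • A i j := by
  simp only [colSum, ← Nat.cast_smul_eq_nsmul (ZMod 2), ZMod.natCast_val, ZMod.cast_id', id]

@[simp]
lemma colSum_fromCols_inl (A : Matrix (Fin d) ι S4)
    (B : Matrix (Fin d) κ S4) (x : Fin d → ZMod 2) (j : ι) :
    colSum (Matrix.fromCols A B) x (Sum.inl j) = colSum A x j := rfl

@[simp]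
lemma colSum_fromCols_inr (A : Matrix (Fin d) ι S4)
    (B : Matrix (Fin d) κ S4) (x : Fin d → ZMod 2) (j : κ) :
    colSum (Matrix.fromCols A B) x (Sum.inr j) = colSum B x j := rfl

lemma colSum_matA0 (x : Fin d → ZMod 2) (last : Fin d) (hlast : (last : ℕ) = d - 1)
    (i : Fin d) (hi : (i : ℕ) < d - 1) :
    colSum (matA0 d) x ⟨i, hi⟩ = (x i + x last) • s1 := by
  have hne : i ≠ last := Fin.ne_of_val_ne (by omega)
  rw [colSum_eq_sum_smul, Fintype.sum_eq_add i last hne, add_smul]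
  · simp [matA0, hlast]
  · rintro k ⟨hki, hkl⟩
    have : (k : ℕ) ≠ i ∧ (k : ℕ) ≠ d - 1 := ⟨Fin.val_ne_of_ne hki, hlast ▸ Fin.val_ne_of_ne hkl⟩
    simp [matA0, this, s0]

lemma colSum_matA1 (x : Fin d → ZMod 2) (p : PairIdx d) :
    colSum (matA1 d) x p = (x p.1.1, x p.1.2) := by
  rw [colSum_eq_sum_smul, Fintype.sum_eq_add p.1.1 p.1.2 p.2.ne]
  · simp [matA1, p.2.ne', s2, s3]
  · rintro k ⟨hk₁, hk₂⟩
    simp [matA1, hk₁, hk₂, s0]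

lemma colSum_matB (x : Fin d → ZMod 2) (j : Fin 1) :
    colSum (matB d) x j = (∑ i, x i) • s2 := by
  rw [colSum_eq_sum_smul, Finset.sum_smul]
  rfl

lemma colSum_matC (hd : 0 < d) (x : Fin d → ZMod 2) (j : Fin 1) :
    colSum (matC d) x j = x ⟨0, hd⟩ • s2 := by
  rw [colSum_eq_sum_smul, Fintype.sum_eq_single ⟨0, hd⟩]
  · simp [matC]
  · intro k hk
    simp [matC, Fin.val_ne_of_ne hk, s0]

lemma colSum_matB_one (hd : d % 2 = 1) (j : Fin 1) : colSum (matB d) 1 j = s2 := by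
  have hsum : ∑ _i : Fin d, (1 : ZMod 2) = 1 := by
    rw [Finset.sum_const, Finset.card_univ, Fintype.card_fin, nsmul_one,
      ZMod.natCast_eq_one_iff_odd, Nat.odd_iff, hd]
  rw [colSum_matB, Pi.one_def, hsum, one_smul]

lemma colSum_matC_one (hd : 0 < d) (j : Fin 1) : colSum (matC d) 1 j = s2 := by
  rw [colSum_matC hd, Pi.one_apply, one_smul]

lemma add_eq_one_of_ne {a b : ZMod 2} (h : a ≠ b) : a + b = 1 := by
  revert a b
  decide

lemma pair_eq_s2_or_s3_of_ne {a b : ZMod 2} (h : a ≠ b) : ((a, b) : S4) = s2 ∨ (a, b) = s3 := by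
  revert a b
  decide

lemma eq_one_of_forall_eq_of_ne_zero {x : Fin d → ZMod 2} (hx : x ≠ 0) (k : Fin d)
    (hconst : ∀ i, x i = x k) : x = 1 := by
  obtain ⟨i, hi⟩ := Function.ne_iff.mp hx
  funext j
  rw [hconst j, ← hconst i]
  exact Fin.eq_one_of_ne_zero _ hi

lemma exists_colSum_matA_eq_s1 (hd : 2 ≤ d) {x : Fin d → ZMod 2} (hx : x ≠ 0) :
    ∃ j, colSum (matA d) x j = s1 := by
  set last : Fin d := ⟨d - 1, by omega⟩
  by_cases hconst : ∀ i, x i = x last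
  · obtain rfl := eq_one_of_forall_eq_of_ne_zero hx last hconst
    refine ⟨Sum.inr ⟨(⟨0, by omega⟩, ⟨1, by omega⟩), Fin.mk_lt_mk.mpr one_pos⟩, ?_⟩
    rw [matA, colSum_fromCols_inr, colSum_matA1]
    rfl
  · obtain ⟨i, hi⟩ := not_forall.mp hconst
    have hil : (i : ℕ) < d - 1 :=
      lt_of_le_of_ne (Nat.le_sub_one_of_lt i.isLt) fun h ↦ hi (congrArg x (Fin.ext h))
    refine ⟨Sum.inl ⟨i, hil⟩, ?_⟩
    rw [matA, colSum_fromCols_inl, colSum_matA0 x last rfl i hil, add_eq_one_of_ne hi, one_smul]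

lemma exists_colSum_matA1_eq_s2_or_s3 {x : Fin d → ZMod 2} {a b : Fin d}
    (hab : x a ≠ x b) : ∃ p, colSum (matA1 d) x p = s2 ∨ colSum (matA1 d) x p = s3 := by
  rcases lt_or_gt_of_ne (ne_of_apply_ne x hab) with hlt | hgt
  · exact ⟨⟨(a, b), hlt⟩, colSum_matA1 x _ ▸ pair_eq_s2_or_s3_of_ne hab⟩
  · exact ⟨⟨(b, a), hgt⟩, colSum_matA1 x _ ▸ pair_eq_s2_or_s3_of_ne hab.symm⟩

theorem free_effective_fromCols_matA (hd : 2 ≤ d) (T : Matrix (Fin d) κ S4)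
    (hT : ∃ k, colSum T 1 k = s2 ∨ colSum T 1 k = s3) {x : Fin d → ZMod 2} (hx : x ≠ 0) :
    (∃ j, colSum (Matrix.fromCols (matA d) T) x j = s1) ∧
      ∃ j, colSum (Matrix.fromCols (matA d) T) x j = s2 ∨
        colSum (Matrix.fromCols (matA d) T) x j = s3 := by
  obtain ⟨j, hj⟩ := exists_colSum_matA_eq_s1 hd hx
  refine ⟨⟨Sum.inl j, hj⟩, ?_⟩
  by_cases hconst : ∀ i, x i = x ⟨0, by omega⟩
  · obtain rfl := eq_one_of_forall_eq_of_ne_zero hx _ hconst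
    obtain ⟨k, hk⟩ := hT
    exact ⟨Sum.inr k, hk⟩
  · obtain ⟨i, hi⟩ := not_forall.mp hconst
    obtain ⟨p, hp⟩ := exists_colSum_matA1_eq_s2_or_s3 hi
    exact ⟨Sum.inl (Sum.inr p), hp⟩

end

/-- for `d ≥ 2`, the matrix `F` (given per residue of `d`: `F = [A,B,C,C]` if
`d ≡ 0 mod 2`, `F = [A,B,B]` if `d ≡ 1 mod 4`, `F = [A,C,C,C,C]` if `d ≡ 3 mod 4`)
is free and effective: for every nonzero `x ∈ F₂^d` some column sum `s_j(x)` equals `1`,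
and some column sum `s_{j'}(x)` lies in `{2,3}`. -/
theorem matF_free_effective (d : ℕ) (hd : 2 ≤ d) :
    (d % 2 = 0 → ∀ x : Fin d → ZMod 2, x ≠ 0 →
      (∃ j, colSum (matE0 d) x j = s1) ∧
      (∃ j', colSum (matE0 d) x j' = s2 ∨ colSum (matE0 d) x j' = s3)) ∧
    (d % 4 = 1 → ∀ x : Fin d → ZMod 2, x ≠ 0 →
      (∃ j, colSum (matE1 d) x j = s1) ∧
      (∃ j', colSum (matE1 d) x j' = s2 ∨ colSum (matE1 d) x j' = s3)) ∧
    (d % 4 = 3 → ∀ x : Fin d → ZMod 2, x ≠ 0 →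
      (∃ j, colSum (matF3 d) x j = s1) ∧
      (∃ j', colSum (matF3 d) x j' = s2 ∨ colSum (matF3 d) x j' = s3)) := by
  have hd₀ : 0 < d := by omega
  refine ⟨fun _ x hx ↦ ?_, fun h₁ x hx ↦ ?_, fun _ x hx ↦ ?_⟩
  · exact free_effective_fromCols_matA hd _
      ⟨Sum.inr (Sum.inl 0), Or.inl (colSum_matC_one hd₀ 0)⟩ hx
  · exact free_effective_fromCols_matA hd _
      ⟨Sum.inl 0, Or.inl (colSum_matB_one (by omega) 0)⟩ hx
  · exact free_effective_fromCols_matA hd _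
      ⟨Sum.inl 0, Or.inl (colSum_matC_one hd₀ 0)⟩ hx
end
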